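/- Let $h \geq 2$ and let $g$ be the rotation of $\mathbb{R}^2$ by angle $2\pi/h$ about the origin. Let $\rho > 0$, $\theta_0 \in \mathbb{R}$, and let $0 < j < h$. Set $a_i = \rho e^{\mathrm{i}(\theta_0 + 2\pi i/h)}$ for $i \in \{0, 1, j, j+1\}$ (points on the circle of radius $\rho$). Let $\Gamma$ be a continuous path in $\{x \in \mathbb{R}^2 : |x| \geq \rho\}$ from $a_0$ to $a_j$. Then $\Gamma$ and its rotation $g(\Gamma)$ (a path from $a_1$ to $a_{j+1}$) must intersect: $\Gamma \cap g(\Gamma) \neq \emptyset$. -/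

import Mathlib

/-!
Write `γ = exp ∘ u` on `[0, 1]`. Then `u` lies in the half-plane `Re ≥ log ρ`, its endpoints lie on
the boundary line and differ by `β i` with `β = α (j + h k)`, `α = 2π / h`, so `|β| ≥ α` because
`h ∤ j`; a point of `γ` on its rotation is a solution of `u s = u t + α i`. If there were none,
`F (s, t) = u s - u t - α i` would be a nonvanishing map on the unit square, hence with a continuous
logarithm. On the horizontal sides `F` stays in the closed right half-plane and on the vertical
sides in the closed left one, so the variation of `arg F` along each side is read off from the
corner values `-α i`, `(β - α) i`, `-(β + α) i`, and the four variations add up to `2π`, not `0`.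
-/

open Real Complex

instance : ContractibleSpace unitInterval :=
  (convex_Icc (0 : ℝ) 1).contractibleSpace ⟨0, unitInterval.zero_mem⟩

instance : LocallyPathConnectedSpace unitInterval :=
  (convex_Icc (0 : ℝ) 1).locallyPathConnectedSpace

theorem exists_continuous_exp_eq {A : Type*} [TopologicalSpace A] [SimplyConnectedSpace A]
    [LocallyPathConnectedSpace A] {f : A → ℂ} (hf : Continuous f) (hf0 : ∀ a, f a ≠ 0) :
    ∃ L : A → ℂ, Continuous L ∧ ∀ a, exp (L a) = f a := by
  obtain ⟨a₀⟩ : Nonempty A := inferInstance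
  obtain ⟨L, ⟨-, hL⟩, -⟩ :=
    isCoveringMapOn_exp.existsUnique_continuousMap_lifts ⟨f, hf⟩ (exp_log (hf0 a₀)) hf0
  exact ⟨L, L.continuous, congrFun hL⟩

theorem sub_eq_log_sub_log_of_exp_eq {X : Type*} [TopologicalSpace X] [PreconnectedSpace X]
    {L F : X → ℂ} (hL : Continuous L) (hF : Continuous F) (hslit : ∀ x, F x ∈ slitPlane)
    (hLF : ∀ x, exp (L x) = F x) (a b : X) : L b - L a = log (F b) - log (F a) := by
  have hmaps : Set.MapsTo (fun x ↦ L x - log (F x)) Set.univ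
      (AddSubgroup.zmultiples (2 * π * I)) := by
    intro x _
    obtain ⟨n, hn⟩ := exp_eq_exp_iff_exists_int.1
      ((hLF x).trans (exp_log (slitPlane_ne_zero (hslit x))).symm)
    exact ⟨n, by simp [hn]⟩
  have : L b - log (F b) = L a - log (F a) := isPreconnected_univ.constant_of_mapsTo
    (isDiscrete_iff_discreteTopology.2 (NormedSpace.discreteTopology_zmultiples _))
    (hL.sub (hF.clog hslit)).continuousOn hmaps (Set.mem_univ b) (Set.mem_univ a)
  linear_combination this

theorem mem_slitPlane_of_re_nonneg {z : ℂ} (hre : 0 ≤ z.re) (hz : z ≠ 0) : z ∈ slitPlane := by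
  rw [mem_slitPlane_iff]
  by_contra! h
  exact hz (Complex.ext (le_antisymm h.1 hre) h.2)

theorem arg_ofReal_mul_I_of_pos {y : ℝ} (hy : 0 < y) : arg (y * I) = π / 2 := by
  rw [arg_real_mul I hy, arg_I]

theorem arg_ofReal_mul_I_of_neg {y : ℝ} (hy : y < 0) : arg (y * I) = -(π / 2) := by
  rw [show (y : ℂ) * I = (-y : ℝ) * -I by push_cast; ring, arg_real_mul _ (neg_pos.2 hy), arg_neg_I]

theorem exists_eq_add_mul_I_of_re_le {u : unitInterval → ℂ} (hu : Continuous u) {α β : ℝ}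
    (hα : 0 < α) (hαβ : α ≤ |β|) (hre : ∀ t, (u 0).re ≤ (u t).re) (hu1 : u 1 = u 0 + β * I) :
    ∃ s t, u s = u t + α * I := by
  by_contra! hne
  set F : unitInterval × unitInterval → ℂ := fun p ↦ u p.1 - u p.2 - α * I with hF
  have hF0 : ∀ p, F p ≠ 0 := fun p hp ↦ hne p.1 p.2 (by linear_combination hp)
  obtain ⟨L, hL, hLF⟩ := exists_continuous_exp_eq (by fun_prop : Continuous F) hF0
  have hhoriz : ∀ t, (u t).re = (u 0).re →
      L (1, t) - L (0, t) = log (F (1, t)) - log (F (0, t)) := fun t ht ↦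
    sub_eq_log_sub_log_of_exp_eq (L := fun s ↦ L (s, t)) (F := fun s ↦ F (s, t)) (by fun_prop)
      (by fun_prop) (fun s ↦ mem_slitPlane_of_re_nonneg (by simp [hF, ht, hre s]) (hF0 _))
      (fun s ↦ hLF _) 0 1
  have hvert : ∀ s, (u s).re = (u 0).re →
      L (s, 1) - L (s, 0) = log (-F (s, 1)) - log (-F (s, 0)) := fun s hs ↦ by
    have := sub_eq_log_sub_log_of_exp_eq (L := fun t ↦ L (s, t) + π * I) (F := fun t ↦ -F (s, t))
      (by fun_prop) (by fun_prop)
      (fun t ↦ mem_slitPlane_of_re_nonneg (by simp [hF, hs, hre t]) (neg_ne_zero.2 (hF0 _)))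
      (fun t ↦ by rw [Complex.exp_add, exp_pi_mul_I, hLF]; ring) 0 1
    linear_combination this
  have hre1 : (u 1).re = (u 0).re := by simp [hu1]
  have hloop : log (F (1, 0)) - log (F (0, 0)) + (log (-F (1, 1)) - log (-F (1, 0)))
      - (log (F (1, 1)) - log (F (0, 1))) - (log (-F (0, 1)) - log (-F (0, 0))) = 0 := by
    linear_combination -hhoriz 0 rfl - hvert 1 hre1 + hhoriz 1 hre1 + hvert 0 rfl
  have h00 : F (0, 0) = ((-α : ℝ) : ℂ) * I := by simp only [hF]; push_cast; ring
  have h11 : F (1, 1) = ((-α : ℝ) : ℂ) * I := by simp only [hF]; push_cast; ring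
  have h10 : F (1, 0) = ((β - α : ℝ) : ℂ) * I := by
    simp only [hF, hu1]; push_cast; ring
  have h01 : F (0, 1) = ((-(β + α) : ℝ) : ℂ) * I := by
    simp only [hF, hu1]; push_cast; ring
  have hβα : β ≠ α := fun h ↦ hF0 (1, 0) (by simp [h10, h])
  have hβα' : β ≠ -α := fun h ↦ hF0 (0, 1) (by simp [h01, h])
  replace hloop := congrArg im hloop
  simp only [sub_im, add_im, log_im, zero_im, h00, h11, h10, h01, ← neg_mul, ← ofReal_neg] at hloop
  rcases le_abs'.1 hαβ with hβ | hβ <;>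
  · simp (disch := grind) only [arg_ofReal_mul_I_of_pos, arg_ofReal_mul_I_of_neg] at hloop
    linarith [pi_pos]

theorem stmt11_general (h : ℕ) (j : ℕ) (hj0 : 0 < j) (hjh : j < h)
    (ρ θ₀ : ℝ) (hρ : 0 < ρ)
    (γ : ℝ → ℂ) (hγ : ContinuousOn γ (Set.Icc 0 1))
    (hstart : γ 0 = (ρ : ℂ) * Complex.exp (Complex.I * θ₀))
    (hend : γ 1 = (ρ : ℂ) * Complex.exp (Complex.I * θ₀) *
      Complex.exp (2 * (π : ℂ) * Complex.I / h) ^ j)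
    (hext : ∀ t ∈ Set.Icc (0 : ℝ) 1, ρ ≤ ‖γ t‖) :
    ∃ s ∈ Set.Icc (0 : ℝ) 1, ∃ t ∈ Set.Icc (0 : ℝ) 1,
      γ s = Complex.exp (2 * (π : ℂ) * Complex.I / h) * γ t := by
  have hh : (0 : ℝ) < h := by exact_mod_cast hj0.trans hjh
  set α : ℝ := 2 * π / h
  have hα : 0 < α := by positivity
  have hrot : exp (2 * π * I / h) = exp (α * I) := by simp only [α]; push_cast; ring_nf
  obtain ⟨u, hu, hexp⟩ := exists_continuous_exp_eq (A := unitInterval) (f := fun t ↦ γ t)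
    (hγ.comp_continuous continuous_subtype_val Subtype.property)
    (fun t h0 ↦ by simpa [h0, hρ.not_ge] using hext t t.2)
  have hre : ∀ t, (u 0).re ≤ (u t).re := fun t ↦ by
    rw [← Real.exp_le_exp, ← norm_exp, ← norm_exp, hexp, hexp]
    simpa [hstart, abs_of_pos hρ] using hext t t.2
  obtain ⟨k, hk⟩ : ∃ k : ℤ, u 1 = u 0 + ↑(α * (j + h * k)) * I := by
    obtain ⟨k, hk⟩ := exp_eq_exp_iff_exists_int.1 <|
      show exp (u 1) = exp (u 0 + j * (α * I)) by
        simp [hexp, Complex.exp_add, Complex.exp_nat_mul, hend, hstart, ← hrot]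
    refine ⟨k, hk.trans ?_⟩
    have : (h : ℂ) ≠ 0 := by exact_mod_cast hh.ne'
    simp only [α]; push_cast; field_simp; ring
  have hwinding : α ≤ |α * (j + h * k)| := by
    have hjk : (j : ℤ) + h * k ≠ 0 := by
      rcases le_or_gt 0 k with hk | hk <;> nlinarith
    rw [abs_mul, abs_of_pos hα]
    exact le_mul_of_one_le_right hα.le (by exact_mod_cast Int.one_le_abs hjk)
  obtain ⟨s, t, hst⟩ := exists_eq_add_mul_I_of_re_le hu hα hwinding hre hk
  refine ⟨s, s.2, t, t.2, ?_⟩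
  rw [hrot, ← hexp s, ← hexp t, hst, Complex.exp_add, mul_comm]

/-- a path `Γ` in the exterior of the disk of radius `ρ` from
`a₀ = ρe^{iθ₀}` to `a_j = ρe^{i(θ₀+2πj/h)}` must intersect its rotation by
`2π/h` (which is a path from `a₁` to `a_{j+1}`). -/
theorem stmt11 (h : ℕ) (hh : 2 ≤ h) (j : ℕ) (hj0 : 0 < j) (hjh : j < h)
    (ρ θ₀ : ℝ) (hρ : 0 < ρ)
    (γ : ℝ → ℂ) (hγ : ContinuousOn γ (Set.Icc 0 1))
    (hstart : γ 0 = (ρ : ℂ) * Complex.exp (Complex.I * θ₀))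
    (hend : γ 1 = (ρ : ℂ) * Complex.exp (Complex.I * θ₀) *
      Complex.exp (2 * (π : ℂ) * Complex.I / h) ^ j)
    (hext : ∀ t ∈ Set.Icc (0 : ℝ) 1, ρ ≤ ‖γ t‖) :
    ∃ s ∈ Set.Icc (0 : ℝ) 1, ∃ t ∈ Set.Icc (0 : ℝ) 1,
      γ s = Complex.exp (2 * (π : ℂ) * Complex.I / h) * γ t :=
  stmt11_general h j hj0 hjh ρ θ₀ hρ γ hγ hstart hend hext
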